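/- arXiv:1912.13085 — 2 statements merged into one kernel-verified Lean document; each statement's English description precedes it below -/
import Mathlib

section
/- Assume the DG mesh setup below. Let M, K, B be m×m real antisymmetric matrices, A an m×m real symmetric matrix, S : ℝ^m → ℝ twice continuously differentiable, and z_h an ℝ^m-valued mesh function. Suppose w and w̌ are ℝ^m-valued mesh functions each satisfying, for every j ∈ {1,…,N}, every t ∈ ℝ, and every φ : I_j → ℝ^m whose components are polynomials of degree at most k, the variational equation ∫_{I_j} (M ∂_t w)·φ dx − ∫_{I_j} (K w)·φ' dx + (K̂w)_{j+1/2}·φ(x_{j+1/2}) − (K̂w)_{j−1/2}·φ(x_{j−1/2}) = ∫_{I_j} (∇²S(z_h) w)·φ dx, and likewise with w replaced by w̌. Then for every j and every t, d/dt[ ∫_{I_j} (M w)·w̌ dx + (1/2)((B[w̌])·[w])_{j+1/2} + (1/2)((B[w̌])·[w])_{j−1/2} ] = 𝓕(w,w̌)_{j+1/2} − 𝓕(w,w̌)_{j−1/2}, where at each interface 𝓕(w,w̌) = ((K w⁺)·w̌⁺ + (K w⁻)·w̌⁻)/2 − K̂w·{w̌} + K̂w̌·{w}. -/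
open Matrix MeasureTheory

/-- `f : ℝ → ℝ` is (globally) a polynomial of degree at most `k`. -/
def IsPolyDegLE (k : ℕ) (f : ℝ → ℝ) : Prop :=
  ∃ p : Polynomial ℝ, p.natDegree ≤ k ∧ ∀ x : ℝ, f x = Polynomial.eval x p

/-- Index of the left interface of cell `j` (periodic, with `N` cells): the interface
`x_{j−1/2}` is interface number `(j + N − 1) % N` where interface `i` sits at node `i+1`. -/
def lidx (N j : ℕ) : ℕ := (j + N - 1) % N

/-- Left trace `v⁻` of a mesh function at interface `j` (located at node `xs (j+1)`). -/
noncomputable def trLv {m : ℕ} (xs : ℕ → ℝ) (z : ℕ → ℝ → ℝ → Fin m → ℝ)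
    (j : ℕ) (t : ℝ) : Fin m → ℝ :=
  z j t (xs (j + 1))

/-- Right trace `v⁺` of a mesh function at interface `j`, periodic with `N` cells:
the value of cell `(j+1) % N` at its left endpoint. -/
noncomputable def trRv {m : ℕ} (N : ℕ) (xs : ℕ → ℝ) (z : ℕ → ℝ → ℝ → Fin m → ℝ)
    (j : ℕ) (t : ℝ) : Fin m → ℝ :=
  z ((j + 1) % N) t (xs ((j + 1) % N))

/-- Jump `[v] = v⁺ − v⁻` at interface `j`. -/
noncomputable def jmpv {m : ℕ} (N : ℕ) (xs : ℕ → ℝ) (z : ℕ → ℝ → ℝ → Fin m → ℝ)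
    (j : ℕ) (t : ℝ) : Fin m → ℝ :=
  trRv N xs z j t - trLv xs z j t

/-- Average `{v} = (v⁺ + v⁻)/2` at interface `j`. -/
noncomputable def avgv {m : ℕ} (N : ℕ) (xs : ℕ → ℝ) (z : ℕ → ℝ → ℝ → Fin m → ℝ)
    (j : ℕ) (t : ℝ) : Fin m → ℝ :=
  (1/2 : ℝ) • (trRv N xs z j t + trLv xs z j t)

/-- The numerical flux `K̂v = K{v} + A[v] + B ∂ₜ[v]` at interface `j`. -/
noncomputable def numFluxv {m : ℕ} (N : ℕ) (xs : ℕ → ℝ)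
    (K A B : Matrix (Fin m) (Fin m) ℝ) (z : ℕ → ℝ → ℝ → Fin m → ℝ)
    (j : ℕ) (t : ℝ) : Fin m → ℝ :=
  K.mulVec (avgv N xs z j t) + A.mulVec (jmpv N xs z j t)
    + B.mulVec (deriv (fun s => jmpv N xs z j s) t)

/-- An `ℝ^m`-valued mesh function: in each cell, smooth in `t` and, for each `t`,
componentwise a polynomial of degree at most `k` in `x`. -/
def IsMeshFun {m : ℕ} (N k : ℕ) (z : ℕ → ℝ → ℝ → Fin m → ℝ) : Prop :=
  (∀ j < N, ∀ (t : ℝ) (i : Fin m), IsPolyDegLE k (fun x => z j t x i)) ∧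
  (∀ j < N, ∀ (x : ℝ) (i : Fin m), ContDiff ℝ (⊤ : ℕ∞) (fun t => z j t x i))

/-- The gradient of `S : ℝ^m → ℝ`, as the vector of partial derivatives. -/
noncomputable def gradS {m : ℕ} (S : (Fin m → ℝ) → ℝ) (v : Fin m → ℝ) : Fin m → ℝ :=
  fun i => fderiv ℝ S v (Pi.single i 1)

/-- The semi-discrete DG scheme for `M zₜ + K zₓ = ∇S(z)` with numerical flux
`K̂z = K{z} + A[z] + B ∂ₜ[z]` and gradient function `gS`. -/
def SatisfiesDG {m : ℕ} (N k : ℕ) (xs : ℕ → ℝ)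
    (M K A B : Matrix (Fin m) (Fin m) ℝ)
    (gS : (Fin m → ℝ) → Fin m → ℝ) (z : ℕ → ℝ → ℝ → Fin m → ℝ) : Prop :=
  ∀ j < N, ∀ t : ℝ, ∀ φ : ℝ → Fin m → ℝ, (∀ i, IsPolyDegLE k (fun x => φ x i)) →
    (∫ x in (xs j)..(xs (j+1)), M.mulVec (deriv (fun s => z j s x) t) ⬝ᵥ φ x)
      - (∫ x in (xs j)..(xs (j+1)), K.mulVec (z j t x) ⬝ᵥ deriv φ x)
      + numFluxv N xs K A B z j t ⬝ᵥ φ (xs (j+1))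
      - numFluxv N xs K A B z (lidx N j) t ⬝ᵥ φ (xs j)
    = ∫ x in (xs j)..(xs (j+1)), gS (z j t x) ⬝ᵥ φ x

/-- `𝓕(z,ž) = {(Kz)·ž} − K̂z·{ž} + K̂ž·{z}` at interface `j`. -/
noncomputable def calF {m : ℕ} (N : ℕ) (xs : ℕ → ℝ)
    (K A B : Matrix (Fin m) (Fin m) ℝ)
    (z zv : ℕ → ℝ → ℝ → Fin m → ℝ) (j : ℕ) (t : ℝ) : ℝ :=
  ((K.mulVec (trRv N xs z j t) ⬝ᵥ trRv N xs zv j t)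
      + (K.mulVec (trLv xs z j t) ⬝ᵥ trLv xs zv j t)) / 2
    - numFluxv N xs K A B z j t ⬝ᵥ avgv N xs zv j t
    + numFluxv N xs K A B zv j t ⬝ᵥ avgv N xs z j t

/-- The Hessian matrix of `S : ℝ^m → ℝ`, as the matrix of second partial derivatives. -/
noncomputable def hessS {m : ℕ} (S : (Fin m → ℝ) → ℝ) (v : Fin m → ℝ) :
    Matrix (Fin m) (Fin m) ℝ :=
  fun i j => fderiv ℝ (fun u => fderiv ℝ S u (Pi.single j 1)) v (Pi.single i 1)

section AuxLemmas

variable {m : ℕ}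

lemma skew_dot {M : Matrix (Fin m) (Fin m) ℝ} (hM : Mᵀ = -M) (u v : Fin m → ℝ) :
    M.mulVec u ⬝ᵥ v = -(M.mulVec v ⬝ᵥ u) := by
  rw [dotProduct_comm, Matrix.dotProduct_mulVec, ← Matrix.mulVec_transpose, hM,
    Matrix.neg_mulVec, neg_dotProduct]

lemma symm_dot {M : Matrix (Fin m) (Fin m) ℝ} (hM : Mᵀ = M) (u v : Fin m → ℝ) :
    M.mulVec u ⬝ᵥ v = M.mulVec v ⬝ᵥ u := by
  rw [dotProduct_comm, Matrix.dotProduct_mulVec, ← Matrix.mulVec_transpose, hM]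

lemma hasDerivAt_bilin (C : Matrix (Fin m) (Fin m) ℝ) {f g : ℝ → Fin m → ℝ}
    {f' g' : Fin m → ℝ} {t : ℝ}
    (hf : ∀ i, HasDerivAt (fun s => f s i) (f' i) t)
    (hg : ∀ i, HasDerivAt (fun s => g s i) (g' i) t) :
    HasDerivAt (fun s => C.mulVec (f s) ⬝ᵥ g s)
      (C.mulVec f' ⬝ᵥ g t + C.mulVec (f t) ⬝ᵥ g') t := by
  simp only [Matrix.mulVec, dotProduct]
  rw [← Finset.sum_add_distrib]
  exact HasDerivAt.fun_sum fun i _ =>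
    ((HasDerivAt.fun_sum fun j _ => (hf j).const_mul (C i j)).mul (hg i))

lemma cont_bilin (C : Matrix (Fin m) (Fin m) ℝ) {f g : ℝ → Fin m → ℝ}
    (hf : ∀ i, Continuous fun x => f x i) (hg : ∀ i, Continuous fun x => g x i) :
    Continuous fun x => C.mulVec (f x) ⬝ᵥ g x := by
  simp only [Matrix.mulVec, dotProduct]
  exact continuous_finset_sum _ fun i _ =>
    ((continuous_finset_sum _ fun j _ => (continuous_const.mul (hf j))).mul (hg i))

lemma mulVec_sum' (C : Matrix (Fin m) (Fin m) ℝ) (R : Finset ℕ) (w : ℕ → Fin m → ℝ) :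
    C.mulVec (∑ n ∈ R, w n) = ∑ n ∈ R, C.mulVec (w n) := by
  induction R using Finset.cons_induction with
  | empty => simp [Matrix.mulVec_zero]
  | cons a s ha ih => rw [Finset.sum_cons, Finset.sum_cons, Matrix.mulVec_add, ih]

lemma sum_dot' (R : Finset ℕ) (w : ℕ → Fin m → ℝ) (v : Fin m → ℝ) :
    (∑ n ∈ R, w n) ⬝ᵥ v = ∑ n ∈ R, w n ⬝ᵥ v := by
  induction R using Finset.cons_induction with
  | empty => simp
  | cons a s ha ih => rw [Finset.sum_cons, Finset.sum_cons, add_dotProduct, ih]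

lemma dot_sum' (R : Finset ℕ) (v : Fin m → ℝ) (w : ℕ → Fin m → ℝ) :
    v ⬝ᵥ (∑ n ∈ R, w n) = ∑ n ∈ R, v ⬝ᵥ w n := by
  induction R using Finset.cons_induction with
  | empty => simp
  | cons a s ha ih => rw [Finset.sum_cons, Finset.sum_cons, dotProduct_add, ih]

lemma bilin_sum_sum (C : Matrix (Fin m) (Fin m) ℝ) (e f : ℕ → ℝ) (R1 R2 : Finset ℕ)
    (U V : ℕ → Fin m → ℝ) :
    C.mulVec (∑ n' ∈ R1, e n' • U n') ⬝ᵥ (∑ n ∈ R2, f n • V n)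
      = ∑ n' ∈ R1, ∑ n ∈ R2, e n' * f n * (C.mulVec (U n') ⬝ᵥ V n) := by
  rw [mulVec_sum', sum_dot']
  refine Finset.sum_congr rfl fun n' _ => ?_
  rw [dot_sum']
  refine Finset.sum_congr rfl fun n _ => ?_
  rw [Matrix.mulVec_smul, smul_dotProduct, dotProduct_smul,
    smul_eq_mul, smul_eq_mul]
  ring

/-- polynomial function (no degree bound) -/
def PF (g : ℝ → ℝ) : Prop := ∃ p : Polynomial ℝ, ∀ x, g x = Polynomial.eval x p

lemma PF.continuous {g : ℝ → ℝ} (h : PF g) : Continuous g := by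
  obtain ⟨p, hp⟩ := h
  rw [funext hp]; exact p.continuous_aeval

lemma PF.hasDerivAt {g : ℝ → ℝ} (h : PF g) (x : ℝ) : HasDerivAt g (deriv g x) x := by
  obtain ⟨p, hp⟩ := h
  rw [funext hp]
  exact (p.differentiable.differentiableAt).hasDerivAt

lemma PF.derivPF {g : ℝ → ℝ} (h : PF g) : PF (deriv g) := by
  obtain ⟨p, hp⟩ := h
  refine ⟨p.derivative, fun x => ?_⟩
  rw [funext hp, Polynomial.deriv]

lemma PF.intervalIntegrable {g : ℝ → ℝ} (h : PF g) (a b : ℝ) :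
    IntervalIntegrable g MeasureTheory.volume a b :=
  h.continuous.intervalIntegrable a b

lemma PF.integral_deriv {g : ℝ → ℝ} (h : PF g) (a b : ℝ) :
    ∫ x in a..b, deriv g x = g b - g a :=
  intervalIntegral.integral_deriv_eq_sub (fun x _ => (h.hasDerivAt x).differentiableAt)
    (h.derivPF.intervalIntegrable a b)

lemma IsPolyDegLE.pf {k : ℕ} {g : ℝ → ℝ} (h : IsPolyDegLE k g) : PF g :=
  ⟨h.choose, h.choose_spec.2⟩

lemma PF_bilin (C : Matrix (Fin m) (Fin m) ℝ) {f g : ℝ → Fin m → ℝ}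
    (hf : ∀ i, PF fun x => f x i) (hg : ∀ i, PF fun x => g x i) :
    PF fun x => C.mulVec (f x) ⬝ᵥ g x := by
  choose p hp using hf
  choose q hq using hg
  refine ⟨∑ i : Fin m, (∑ i' : Fin m, Polynomial.C (C i i') * p i') * q i, fun x => ?_⟩
  simp only [Matrix.mulVec, dotProduct, Polynomial.eval_finset_sum,
    Polynomial.eval_mul, Polynomial.eval_C]
  refine Finset.sum_congr rfl fun i _ => ?_
  rw [← hq i x]
  congr 1
  exact Finset.sum_congr rfl fun i' _ => by rw [← hp i' x]

/-- Integration by parts for polynomial vector functions. -/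
lemma poly_IBP (K : Matrix (Fin m) (Fin m) ℝ) {k : ℕ} {U V : ℝ → Fin m → ℝ}
    (hU : ∀ i, IsPolyDegLE k fun x => U x i) (hV : ∀ i, IsPolyDegLE k fun x => V x i)
    (a b : ℝ) :
    (∫ x in a..b, K.mulVec (U x) ⬝ᵥ (fun i => deriv (fun y => V y i) x))
      + (∫ x in a..b, K.mulVec (fun i => deriv (fun y => U y i) x) ⬝ᵥ V x)
    = K.mulVec (U b) ⬝ᵥ V b - K.mulVec (U a) ⬝ᵥ V a := by
  have hPU : ∀ i, PF fun x => U x i := fun i => (hU i).pf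
  have hPV : ∀ i, PF fun x => V x i := fun i => (hV i).pf
  have hgd : ∀ x, HasDerivAt (fun y => K.mulVec (U y) ⬝ᵥ V y)
      (K.mulVec (fun i => deriv (fun y => U y i) x) ⬝ᵥ V x
        + K.mulVec (U x) ⬝ᵥ (fun i => deriv (fun y => V y i) x)) x :=
    fun x => hasDerivAt_bilin K (fun i => (hPU i).hasDerivAt x) (fun i => (hPV i).hasDerivAt x)
  have hPg : PF fun x => K.mulVec (U x) ⬝ᵥ V x := PF_bilin K hPU hPV
  have hc1 : Continuous fun x => K.mulVec (U x) ⬝ᵥ (fun i => deriv (fun y => V y i) x) :=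
    cont_bilin K (fun i => (hPU i).continuous) (fun i => (hPV i).derivPF.continuous)
  have hc2 : Continuous fun x => K.mulVec (fun i => deriv (fun y => U y i) x) ⬝ᵥ V x :=
    cont_bilin K (fun i => (hPU i).derivPF.continuous) (fun i => (hPV i).continuous)
  rw [← intervalIntegral.integral_add (hc1.intervalIntegrable a b) (hc2.intervalIntegrable a b)]
  have heq : (fun x => K.mulVec (U x) ⬝ᵥ (fun i => deriv (fun y => V y i) x)
        + K.mulVec (fun i => deriv (fun y => U y i) x) ⬝ᵥ V x)
      = deriv fun y => K.mulVec (U y) ⬝ᵥ V y := by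
    funext x
    rw [(hgd x).deriv]; ring
  rw [heq, hPg.integral_deriv a b]

/-- fixed Lagrange basis polynomials on nodes `0,…,k`. -/
noncomputable def Lb (k n : ℕ) : Polynomial ℝ :=
  Lagrange.basis (Finset.range (k+1)) (Nat.cast : ℕ → ℝ) n

lemma mesh_rep_comp {k : ℕ} {g : ℝ → ℝ} (hg : IsPolyDegLE k g) (x : ℝ) :
    g x = ∑ n ∈ Finset.range (k+1), (Lb k n).eval x * g (n : ℝ) := by
  obtain ⟨p, hdeg, hp⟩ := hg
  have hinj : Set.InjOn (Nat.cast : ℕ → ℝ) (Finset.range (k+1)) :=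
    fun a _ b _ h => Nat.cast_injective h
  have hlt : p.degree < ((Finset.range (k+1)).card : WithBot ℕ) := by
    rw [Finset.card_range]
    exact lt_of_le_of_lt p.degree_le_natDegree (by exact_mod_cast Nat.lt_succ_of_le hdeg)
  have hrep := Lagrange.eq_interpolate hinj hlt
  have h2 := congrArg (Polynomial.eval x) hrep
  rw [Lagrange.interpolate_apply] at h2
  rw [hp x, h2, Polynomial.eval_finset_sum]
  refine Finset.sum_congr rfl fun n _ => ?_
  rw [Polynomial.eval_mul, Polynomial.eval_C, hp, Lb, mul_comm]

lemma mesh_rep {N k : ℕ} {z : ℕ → ℝ → ℝ → Fin m → ℝ} (hz : IsMeshFun N k z)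
    {j : ℕ} (hj : j < N) (t x : ℝ) :
    z j t x = ∑ n ∈ Finset.range (k+1), (Lb k n).eval x • z j t (n : ℝ) := by
  funext i
  rw [Finset.sum_apply]
  simpa [Pi.smul_apply, smul_eq_mul] using mesh_rep_comp (hz.1 j hj t i) x

lemma mesh_node_diff {N k : ℕ} {z : ℕ → ℝ → ℝ → Fin m → ℝ} (hz : IsMeshFun N k z) {j : ℕ}
    (hj : j < N) (x t : ℝ) (i : Fin m) :
    DifferentiableAt ℝ (fun s => z j s x i) t :=
  ((hz.2 j hj x i).differentiable (by simp)).differentiableAt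

/-- componentwise time derivative of a mesh function -/
noncomputable def dt (z : ℕ → ℝ → ℝ → Fin m → ℝ) (j : ℕ) (t x : ℝ) : Fin m → ℝ :=
  fun i => deriv (fun s => z j s x i) t

lemma dt_eq_deriv {N k : ℕ} {z : ℕ → ℝ → ℝ → Fin m → ℝ} (hz : IsMeshFun N k z) {j : ℕ}
    (hj : j < N) (t x : ℝ) : deriv (fun s => z j s x) t = dt z j t x :=
  (hasDerivAt_pi.2 fun i => (mesh_node_diff hz hj x t i).hasDerivAt).deriv

lemma dt_rep {N k : ℕ} {z : ℕ → ℝ → ℝ → Fin m → ℝ} (hz : IsMeshFun N k z) {j : ℕ}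
    (hj : j < N) (t x : ℝ) :
    dt z j t x = ∑ n ∈ Finset.range (k+1), (Lb k n).eval x • dt z j t (n : ℝ) := by
  funext i
  rw [Finset.sum_apply]
  simp only [Pi.smul_apply, smul_eq_mul]
  show deriv (fun s => z j s x i) t = _
  simp only [dt]
  have hfun : (fun s => z j s x i)
      = fun s => ∑ n ∈ Finset.range (k+1), (Lb k n).eval x * z j s (n : ℝ) i :=
    funext fun s => mesh_rep_comp (hz.1 j hj s i) x
  rw [hfun]
  exact (HasDerivAt.fun_sum (A := fun (n : ℕ) s => (Lb k n).eval x * z j s (n : ℝ) i)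
    (A' := fun n => (Lb k n).eval x * deriv (fun s => z j s (n : ℝ) i) t)
    fun n _ => ((mesh_node_diff hz hj (n : ℝ) t i).hasDerivAt.const_mul _)).deriv

lemma int_of_reps {k : ℕ} (C : Matrix (Fin m) (Fin m) ℝ) (a b : ℝ) (Un Vn : ℕ → Fin m → ℝ)
    (U V : ℝ → Fin m → ℝ)
    (hU : ∀ x, U x = ∑ n ∈ Finset.range (k+1), (Lb k n).eval x • Un n)
    (hV : ∀ x, V x = ∑ n ∈ Finset.range (k+1), (Lb k n).eval x • Vn n) :
    ∫ x in a..b, C.mulVec (U x) ⬝ᵥ V x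
      = ∑ n' ∈ Finset.range (k+1), ∑ n ∈ Finset.range (k+1),
          (∫ x in a..b, (Lb k n').eval x * (Lb k n).eval x) * (C.mulVec (Un n') ⬝ᵥ Vn n) := by
  have h1 : ∀ x, C.mulVec (U x) ⬝ᵥ V x
      = ∑ n' ∈ Finset.range (k+1), ∑ n ∈ Finset.range (k+1),
          (Lb k n').eval x * (Lb k n).eval x * (C.mulVec (Un n') ⬝ᵥ Vn n) := fun x => by
    rw [hU x, hV x, bilin_sum_sum]
  have hcont : ∀ n' n : ℕ, Continuous fun x : ℝ =>
      (Lb k n').eval x * (Lb k n).eval x * (C.mulVec (Un n') ⬝ᵥ Vn n) :=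
    fun n' n => ((Lb k n').continuous_aeval.mul (Lb k n).continuous_aeval).mul continuous_const
  simp only [h1]
  rw [intervalIntegral.integral_finset_sum]
  · refine Finset.sum_congr rfl fun n' _ => ?_
    rw [intervalIntegral.integral_finset_sum]
    · exact Finset.sum_congr rfl fun n _ => intervalIntegral.integral_mul_const _ _
    · exact fun n _ => (hcont n' n).intervalIntegrable a b
  · exact fun n' _ => (continuous_finset_sum _ fun n _ => hcont n' n).intervalIntegrable a b

lemma INT {N k : ℕ} {u v : ℕ → ℝ → ℝ → Fin m → ℝ} (hu : IsMeshFun N k u) (hv : IsMeshFun N k v)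
    {j : ℕ} (hj : j < N) (C : Matrix (Fin m) (Fin m) ℝ) (a b t : ℝ) :
    HasDerivAt (fun s => ∫ x in a..b, C.mulVec (u j s x) ⬝ᵥ v j s x)
      ((∫ x in a..b, C.mulVec (dt u j t x) ⬝ᵥ v j t x)
        + ∫ x in a..b, C.mulVec (u j t x) ⬝ᵥ dt v j t x) t := by
  set R := Finset.range (k+1) with hR
  set c : ℕ → ℕ → ℝ := fun n' n => ∫ x in a..b, (Lb k n').eval x * (Lb k n).eval x with hc
  have hrep : ∀ s : ℝ, (∫ x in a..b, C.mulVec (u j s x) ⬝ᵥ v j s x)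
      = ∑ n' ∈ R, ∑ n ∈ R, c n' n * (C.mulVec (u j s (n' : ℝ)) ⬝ᵥ v j s (n : ℝ)) :=
    fun s => int_of_reps C a b _ _ _ _ (fun x => mesh_rep hu hj s x) (fun x => mesh_rep hv hj s x)
  have e1 : (∫ x in a..b, C.mulVec (dt u j t x) ⬝ᵥ v j t x)
      = ∑ n' ∈ R, ∑ n ∈ R, c n' n * (C.mulVec (dt u j t (n' : ℝ)) ⬝ᵥ v j t (n : ℝ)) :=
    int_of_reps C a b _ _ _ _ (fun x => dt_rep hu hj t x) (fun x => mesh_rep hv hj t x)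
  have e2 : (∫ x in a..b, C.mulVec (u j t x) ⬝ᵥ dt v j t x)
      = ∑ n' ∈ R, ∑ n ∈ R, c n' n * (C.mulVec (u j t (n' : ℝ)) ⬝ᵥ dt v j t (n : ℝ)) :=
    int_of_reps C a b _ _ _ _ (fun x => mesh_rep hu hj t x) (fun x => dt_rep hv hj t x)
  have key : HasDerivAt
      (fun s => ∑ n' ∈ R, ∑ n ∈ R, c n' n * (C.mulVec (u j s (n' : ℝ)) ⬝ᵥ v j s (n : ℝ)))
      (∑ n' ∈ R, ∑ n ∈ R, c n' n *
        (C.mulVec (dt u j t (n' : ℝ)) ⬝ᵥ v j t (n : ℝ)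
          + C.mulVec (u j t (n' : ℝ)) ⬝ᵥ dt v j t (n : ℝ))) t := by
    refine HasDerivAt.fun_sum fun n' _ => HasDerivAt.fun_sum fun n _ => HasDerivAt.const_mul _ ?_
    exact hasDerivAt_bilin C (fun i => (mesh_node_diff hu hj _ t i).hasDerivAt)
      (fun i => (mesh_node_diff hv hj _ t i).hasDerivAt)
  have hfun : (fun s => ∫ x in a..b, C.mulVec (u j s x) ⬝ᵥ v j s x)
      = fun s => ∑ n' ∈ R, ∑ n ∈ R, c n' n * (C.mulVec (u j s (n' : ℝ)) ⬝ᵥ v j s (n : ℝ)) :=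
    funext hrep
  rw [hfun, e1, e2]
  convert key using 1
  rw [← Finset.sum_add_distrib]
  refine Finset.sum_congr rfl fun n' _ => ?_
  rw [← Finset.sum_add_distrib]
  exact Finset.sum_congr rfl fun n _ => by ring

lemma alg1 {K A B : Matrix (Fin m) (Fin m) ℝ}
    (hK : Kᵀ = -K) (hA : Aᵀ = A) (hB : Bᵀ = -B) (p q r s dp dr : Fin m → ℝ) :
    (K.mulVec p ⬝ᵥ r + K.mulVec q ⬝ᵥ s) / 2
      - (K.mulVec ((1/2:ℝ) • (p+q)) + A.mulVec (p-q) + B.mulVec dp) ⬝ᵥ ((1/2:ℝ) • (r+s))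
      + (K.mulVec ((1/2:ℝ) • (r+s)) + A.mulVec (r-s) + B.mulVec dr) ⬝ᵥ ((1/2:ℝ) • (p+q))
    = (K.mulVec q ⬝ᵥ s
        - (K.mulVec ((1/2:ℝ) • (p+q)) + A.mulVec (p-q) + B.mulVec dp) ⬝ᵥ s
        + (K.mulVec ((1/2:ℝ) • (r+s)) + A.mulVec (r-s) + B.mulVec dr) ⬝ᵥ q)
      + (1/2) * (B.mulVec dr ⬝ᵥ (p - q) + B.mulVec (r - s) ⬝ᵥ dp) := by
  simp only [Matrix.mulVec_add, Matrix.mulVec_sub, Matrix.mulVec_smul,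
    add_dotProduct, sub_dotProduct, smul_dotProduct,
    dotProduct_add, dotProduct_sub, dotProduct_smul, smul_eq_mul]
  linarith [skew_dot hK p r, skew_dot hK p s, skew_dot hK q r, skew_dot hK q s,
    skew_dot hK r p, skew_dot hK r q, skew_dot hK s p, skew_dot hK s q,
    symm_dot hA r p, symm_dot hA r q, symm_dot hA s p, symm_dot hA s q,
    skew_dot hB r dp, skew_dot hB s dp, skew_dot hB dp r, skew_dot hB dp s,
    skew_dot hB dr p, skew_dot hB dr q, skew_dot hB p dr, skew_dot hB q dr]

lemma alg2 {K A B : Matrix (Fin m) (Fin m) ℝ}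
    (hK : Kᵀ = -K) (hA : Aᵀ = A) (hB : Bᵀ = -B) (p q r s dp dr : Fin m → ℝ) :
    (K.mulVec p ⬝ᵥ r + K.mulVec q ⬝ᵥ s) / 2
      - (K.mulVec ((1/2:ℝ) • (p+q)) + A.mulVec (p-q) + B.mulVec dp) ⬝ᵥ ((1/2:ℝ) • (r+s))
      + (K.mulVec ((1/2:ℝ) • (r+s)) + A.mulVec (r-s) + B.mulVec dr) ⬝ᵥ ((1/2:ℝ) • (p+q))
    = (K.mulVec p ⬝ᵥ r
        - (K.mulVec ((1/2:ℝ) • (p+q)) + A.mulVec (p-q) + B.mulVec dp) ⬝ᵥ r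
        + (K.mulVec ((1/2:ℝ) • (r+s)) + A.mulVec (r-s) + B.mulVec dr) ⬝ᵥ p)
      - (1/2) * (B.mulVec dr ⬝ᵥ (p - q) + B.mulVec (r - s) ⬝ᵥ dp) := by
  simp only [Matrix.mulVec_add, Matrix.mulVec_sub, Matrix.mulVec_smul,
    add_dotProduct, sub_dotProduct, smul_dotProduct,
    dotProduct_add, dotProduct_sub, dotProduct_smul, smul_eq_mul]
  linarith [skew_dot hK p r, skew_dot hK p s, skew_dot hK q r, skew_dot hK q s,
    skew_dot hK r p, skew_dot hK r q, skew_dot hK s p, skew_dot hK s q,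
    symm_dot hA r p, symm_dot hA r q, symm_dot hA s p, symm_dot hA s q,
    skew_dot hB r dp, skew_dot hB s dp, skew_dot hB dp r, skew_dot hB dp s,
    skew_dot hB dr p, skew_dot hB dr q, skew_dot hB p dr, skew_dot hB q dr]

end AuxLemmas

lemma hess_symm {m : ℕ} {S : (Fin m → ℝ) → ℝ} (hS : ContDiff ℝ 2 S) (v : Fin m → ℝ) :
    (hessS S v)ᵀ = hessS S v := by
  have hd : DifferentiableAt ℝ (fderiv ℝ S) v :=
    (((hS.fderiv_right (m := 1) (by norm_num)).differentiable one_ne_zero) v)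
  have h1 : ∀ c : Fin m → ℝ,
      fderiv ℝ (fun u => fderiv ℝ S u c) v = (fderiv ℝ (fderiv ℝ S) v).flip c := by
    intro c
    have := fderiv_clm_apply (c := fderiv ℝ S) (u := fun _ => c) hd (differentiableAt_const c)
    simpa using this
  have hsym : ∀ a b : Fin m → ℝ,
      fderiv ℝ (fderiv ℝ S) v a b = fderiv ℝ (fderiv ℝ S) v b a := by
    intro a b
    exact second_derivative_symmetric
      (fun y => ((hS.differentiable (by norm_num)) y).hasFDerivAt)
      hd.hasFDerivAt a b
  funext i j
  simp only [Matrix.transpose_apply, hessS, h1]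
  exact hsym _ _


/-- Conservation of multi-symplecticity (Theorem 3.1 of the paper): for two solutions
`w`, `w̌` of the discrete variational equation,
`d/dt ω_{h,j} = 𝓕(w,w̌)_{j+1/2} − 𝓕(w,w̌)_{j−1/2}`. -/
theorem stmt6 {m N k : ℕ} (hm : 0 < m) (hN : 0 < N)
    (xs : ℕ → ℝ) (hxs : ∀ i < N, xs i < xs (i+1))
    (M K A B : Matrix (Fin m) (Fin m) ℝ)
    (hM : Mᵀ = -M) (hK : Kᵀ = -K) (hB : Bᵀ = -B) (hA : Aᵀ = A)
    (S : (Fin m → ℝ) → ℝ) (hS : ContDiff ℝ 2 S)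
    (zh w wv : ℕ → ℝ → ℝ → Fin m → ℝ)
    (hzh : IsMeshFun N k zh) (hw : IsMeshFun N k w) (hwv : IsMeshFun N k wv)
    (hweq : ∀ j < N, ∀ t : ℝ, ∀ φ : ℝ → Fin m → ℝ,
      (∀ i, IsPolyDegLE k (fun x => φ x i)) →
      (∫ x in (xs j)..(xs (j+1)), M.mulVec (deriv (fun s => w j s x) t) ⬝ᵥ φ x)
        - (∫ x in (xs j)..(xs (j+1)), K.mulVec (w j t x) ⬝ᵥ deriv φ x)
        + numFluxv N xs K A B w j t ⬝ᵥ φ (xs (j+1))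
        - numFluxv N xs K A B w (lidx N j) t ⬝ᵥ φ (xs j)
      = ∫ x in (xs j)..(xs (j+1)), (hessS S (zh j t x)).mulVec (w j t x) ⬝ᵥ φ x)
    (hwveq : ∀ j < N, ∀ t : ℝ, ∀ φ : ℝ → Fin m → ℝ,
      (∀ i, IsPolyDegLE k (fun x => φ x i)) →
      (∫ x in (xs j)..(xs (j+1)), M.mulVec (deriv (fun s => wv j s x) t) ⬝ᵥ φ x)
        - (∫ x in (xs j)..(xs (j+1)), K.mulVec (wv j t x) ⬝ᵥ deriv φ x)
        + numFluxv N xs K A B wv j t ⬝ᵥ φ (xs (j+1))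
        - numFluxv N xs K A B wv (lidx N j) t ⬝ᵥ φ (xs j)
      = ∫ x in (xs j)..(xs (j+1)), (hessS S (zh j t x)).mulVec (wv j t x) ⬝ᵥ φ x) :
    ∀ j < N, ∀ t : ℝ,
      deriv (fun s =>
          (∫ x in (xs j)..(xs (j+1)), M.mulVec (w j s x) ⬝ᵥ wv j s x)
            + (1/2) * (B.mulVec (jmpv N xs wv j s) ⬝ᵥ jmpv N xs w j s)
            + (1/2) * (B.mulVec (jmpv N xs wv (lidx N j) s) ⬝ᵥ jmpv N xs w (lidx N j) s)) t
        = calF N xs K A B w wv j t - calF N xs K A B w wv (lidx N j) t := by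
  intro j hj t
  classical
  set l := lidx N j with hl
  have hlN : l < N := Nat.mod_lt _ hN
  have hl1 : (l + 1) % N = j := by
    have h1 : j + N - 1 + 1 = j + N := by omega
    rw [hl, lidx, Nat.mod_add_mod, h1, Nat.add_mod_right, Nat.mod_eq_of_lt hj]
  -- differentiability of jump components in time
  have hjd : ∀ (z : ℕ → ℝ → ℝ → Fin m → ℝ), IsMeshFun N k z → ∀ i, i < N →
      ∀ i0 : Fin m, DifferentiableAt ℝ (fun s => jmpv N xs z i s i0) t := by
    intro z hz i hi i0
    have h1 := mesh_node_diff hz (Nat.mod_lt (i+1) hN) (xs ((i+1) % N)) t i0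
    have h2 := mesh_node_diff hz hi (xs (i+1)) t i0
    exact h1.sub h2
  -- flux expansion
  have hflux : ∀ (z : ℕ → ℝ → ℝ → Fin m → ℝ), IsMeshFun N k z → ∀ i, i < N →
      numFluxv N xs K A B z i t
        = K.mulVec ((1/2:ℝ) • (trRv N xs z i t + trLv xs z i t))
          + A.mulVec (trRv N xs z i t - trLv xs z i t)
          + B.mulVec (fun i0 => deriv (fun s => jmpv N xs z i s i0) t) := by
    intro z hz i hi
    show K.mulVec (avgv N xs z i t) + A.mulVec (jmpv N xs z i t)
        + B.mulVec (deriv (fun s => jmpv N xs z i s) t) = _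
    rw [(hasDerivAt_pi.2 fun i0 => (hjd z hz i hi i0).hasDerivAt).deriv]
    rfl
  -- calF at interface j (left-trace form)
  have hcalF1 : calF N xs K A B w wv j t
      = (K.mulVec (trLv xs w j t) ⬝ᵥ trLv xs wv j t
          - numFluxv N xs K A B w j t ⬝ᵥ trLv xs wv j t
          + numFluxv N xs K A B wv j t ⬝ᵥ trLv xs w j t)
        + (1/2) * (B.mulVec (fun i0 => deriv (fun s => jmpv N xs wv j s i0) t)
              ⬝ᵥ (trRv N xs w j t - trLv xs w j t)
            + B.mulVec (trRv N xs wv j t - trLv xs wv j t)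
              ⬝ᵥ (fun i0 => deriv (fun s => jmpv N xs w j s i0) t)) := by
    have h := alg1 hK hA hB (trRv N xs w j t) (trLv xs w j t) (trRv N xs wv j t)
      (trLv xs wv j t) (fun i0 => deriv (fun s => jmpv N xs w j s i0) t)
      (fun i0 => deriv (fun s => jmpv N xs wv j s i0) t)
    rw [← hflux w hw j hj, ← hflux wv hwv j hj] at h
    exact h
  -- calF at interface l (right-trace form)
  have hcalF2 : calF N xs K A B w wv l t
      = (K.mulVec (trRv N xs w l t) ⬝ᵥ trRv N xs wv l t
          - numFluxv N xs K A B w l t ⬝ᵥ trRv N xs wv l t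
          + numFluxv N xs K A B wv l t ⬝ᵥ trRv N xs w l t)
        - (1/2) * (B.mulVec (fun i0 => deriv (fun s => jmpv N xs wv l s i0) t)
              ⬝ᵥ (trRv N xs w l t - trLv xs w l t)
            + B.mulVec (trRv N xs wv l t - trLv xs wv l t)
              ⬝ᵥ (fun i0 => deriv (fun s => jmpv N xs w l s i0) t)) := by
    have h := alg2 hK hA hB (trRv N xs w l t) (trLv xs w l t) (trRv N xs wv l t)
      (trLv xs wv l t) (fun i0 => deriv (fun s => jmpv N xs w l s i0) t)
      (fun i0 => deriv (fun s => jmpv N xs wv l s i0) t)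
    rw [← hflux w hw l hlN, ← hflux wv hwv l hlN] at h
    exact h
  -- trace normalizations
  have htrLj : ∀ z : ℕ → ℝ → ℝ → Fin m → ℝ, trLv xs z j t = z j t (xs (j+1)) := fun _ => rfl
  have htrRl : ∀ z : ℕ → ℝ → ℝ → Fin m → ℝ, trRv N xs z l t = z j t (xs j) := by
    intro z
    show z ((l+1) % N) t (xs ((l+1) % N)) = _
    rw [hl1]
  have hjmpe : ∀ (z : ℕ → ℝ → ℝ → Fin m → ℝ) (i : ℕ),
      jmpv N xs z i t = trRv N xs z i t - trLv xs z i t := fun _ _ => rfl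
  -- time derivatives, componentwise forms
  have hdt_w : ∀ x : ℝ, deriv (fun s => w j s x) t = dt w j t x :=
    fun x => dt_eq_deriv hw hj t x
  have hdt_v : ∀ x : ℝ, deriv (fun s => wv j s x) t = dt wv j t x :=
    fun x => dt_eq_deriv hwv hj t x
  -- spatial derivatives, componentwise forms
  have hdx_w : ∀ x : ℝ, deriv (w j t) x = fun i0 => deriv (fun y => w j t y i0) x :=
    fun x => (hasDerivAt_pi.2 fun i0 => ((hw.1 j hj t i0).pf.hasDerivAt x)).deriv
  have hdx_v : ∀ x : ℝ, deriv (wv j t) x = fun i0 => deriv (fun y => wv j t y i0) x :=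
    fun x => (hasDerivAt_pi.2 fun i0 => ((hwv.1 j hj t i0).pf.hasDerivAt x)).deriv
  -- variational equations with the other solution as test function
  have eq1 := hweq j hj t (wv j t) (hwv.1 j hj t)
  have eq2 := hwveq j hj t (w j t) (hw.1 j hj t)
  rw [← hl] at eq1 eq2
  simp only [hdt_w, hdx_v] at eq1
  simp only [hdt_v, hdx_w] at eq2
  -- Hessian symmetry
  have hHess : (∫ x in (xs j)..(xs (j+1)), (hessS S (zh j t x)).mulVec (w j t x) ⬝ᵥ wv j t x)
      = ∫ x in (xs j)..(xs (j+1)), (hessS S (zh j t x)).mulVec (wv j t x) ⬝ᵥ w j t x := by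
    have : (fun x => (hessS S (zh j t x)).mulVec (w j t x) ⬝ᵥ wv j t x)
        = fun x => (hessS S (zh j t x)).mulVec (wv j t x) ⬝ᵥ w j t x :=
      funext fun x => symm_dot (hess_symm hS (zh j t x)) _ _
    rw [this]
  -- integration by parts
  have hIBP := poly_IBP K (hw.1 j hj t) (hwv.1 j hj t) (xs j) (xs (j+1))
  -- skew swaps
  have hswap : (∫ x in (xs j)..(xs (j+1)),
        K.mulVec (wv j t x) ⬝ᵥ (fun i0 => deriv (fun y => w j t y i0) x))
      = -(∫ x in (xs j)..(xs (j+1)),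
        K.mulVec (fun i0 => deriv (fun y => w j t y i0) x) ⬝ᵥ wv j t x) := by
    rw [← intervalIntegral.integral_neg]
    have : (fun x => K.mulVec (wv j t x) ⬝ᵥ (fun i0 => deriv (fun y => w j t y i0) x))
        = fun x => -(K.mulVec (fun i0 => deriv (fun y => w j t y i0) x) ⬝ᵥ wv j t x) :=
      funext fun x => skew_dot hK _ _
    rw [this]
  have hswap2 : (∫ x in (xs j)..(xs (j+1)), M.mulVec (w j t x) ⬝ᵥ dt wv j t x)
      = -(∫ x in (xs j)..(xs (j+1)), M.mulVec (dt wv j t x) ⬝ᵥ w j t x) := by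
    rw [← intervalIntegral.integral_neg]
    have : (fun x => M.mulVec (w j t x) ⬝ᵥ dt wv j t x)
        = fun x => -(M.mulVec (dt wv j t x) ⬝ᵥ w j t x) :=
      funext fun x => skew_dot hM _ _
    rw [this]
  -- total derivative
  have hIw := INT hw hwv hj M (xs j) (xs (j+1)) t
  have hJj : HasDerivAt (fun s => B.mulVec (jmpv N xs wv j s) ⬝ᵥ jmpv N xs w j s)
      (B.mulVec (fun i0 => deriv (fun s => jmpv N xs wv j s i0) t) ⬝ᵥ jmpv N xs w j t
        + B.mulVec (jmpv N xs wv j t) ⬝ᵥ (fun i0 => deriv (fun s => jmpv N xs w j s i0) t)) t :=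
    hasDerivAt_bilin B (fun i0 => (hjd wv hwv j hj i0).hasDerivAt)
      (fun i0 => (hjd w hw j hj i0).hasDerivAt)
  have hJl : HasDerivAt (fun s => B.mulVec (jmpv N xs wv l s) ⬝ᵥ jmpv N xs w l s)
      (B.mulVec (fun i0 => deriv (fun s => jmpv N xs wv l s i0) t) ⬝ᵥ jmpv N xs w l t
        + B.mulVec (jmpv N xs wv l t) ⬝ᵥ (fun i0 => deriv (fun s => jmpv N xs w l s i0) t)) t :=
    hasDerivAt_bilin B (fun i0 => (hjd wv hwv l hlN i0).hasDerivAt)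
      (fun i0 => (hjd w hw l hlN i0).hasDerivAt)
  have htot : HasDerivAt (fun s =>
        (∫ x in (xs j)..(xs (j+1)), M.mulVec (w j s x) ⬝ᵥ wv j s x)
          + (1/2) * (B.mulVec (jmpv N xs wv j s) ⬝ᵥ jmpv N xs w j s)
          + (1/2) * (B.mulVec (jmpv N xs wv l s) ⬝ᵥ jmpv N xs w l s))
      (((∫ x in (xs j)..(xs (j+1)), M.mulVec (dt w j t x) ⬝ᵥ wv j t x)
          + ∫ x in (xs j)..(xs (j+1)), M.mulVec (w j t x) ⬝ᵥ dt wv j t x)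
        + (1/2) * (B.mulVec (fun i0 => deriv (fun s => jmpv N xs wv j s i0) t) ⬝ᵥ jmpv N xs w j t
            + B.mulVec (jmpv N xs wv j t) ⬝ᵥ (fun i0 => deriv (fun s => jmpv N xs w j s i0) t))
        + (1/2) * (B.mulVec (fun i0 => deriv (fun s => jmpv N xs wv l s i0) t) ⬝ᵥ jmpv N xs w l t
            + B.mulVec (jmpv N xs wv l t) ⬝ᵥ (fun i0 => deriv (fun s => jmpv N xs w l s i0) t))) t := by
    exact (hIw.add (hJj.const_mul (1/2 : ℝ))).add (hJl.const_mul (1/2 : ℝ))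
  rw [htot.deriv, hcalF1, hcalF2]
  simp only [htrLj, htrRl, hjmpe] at *
  linarith [eq1, eq2, hIBP, hswap, hswap2, hHess]
end

section
/- Assume the DG mesh setup below, with M, K, B m×m real antisymmetric matrices, A an m×m real symmetric matrix, S : ℝ^m → ℝ continuously differentiable, and an ℝ^m-valued mesh function z_h satisfying the semi-discrete DG scheme. Suppose additionally: (i) K = Qᵀ J Q where Q is m×m real orthogonal, Λ is a ⌊m/2⌋×⌊m/2⌋ real matrix, and J is the block matrix [[0, −Λᵀ],[Λ, 0]] if m is even or [[0, 0, −Λᵀ],[0, 0, 0],[Λ, 0, 0]] (middle block of size 1) if m is odd; (ii) B = β M for some β ∈ ℝ; (iii) the last ⌊m/2⌋ columns of M Qᵀ are zero. Let v_h denote the vector of the last ⌊m/2⌋ components of Q z_h, let ∇_v S(z) denote the vector of the last ⌊m/2⌋ components of Q ∇S(z), and let Ã = Qᵀ D Q A where D = diag(I_{⌊m/2⌋}, −I_{⌊m/2⌋}) if m is even and D = diag(I_{⌊m/2⌋}, 1, −I_{⌊m/2⌋}) if m is odd. Then for all t the conserved energy 𝓔_h(t) = Σ_j ∫_{I_j}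 ( S(z_h) − (1/2)(K ∂_x z_h)·z_h ) dx + (1/2) Σ_j ( (K{z_h} + A[z_h])·[z_h] )_{j+1/2} equals Σ_j ∫_{I_j} ( S(z_h) − ∇_v S(z_h)·v_h ) dx + (1/2) Σ_j ( (Ã[z_h])·[z_h] )_{j+1/2}. In particular, if à is antisymmetric then 𝓔_h(t) = Σ_j ∫_{I_j} ( S(z_h) − ∇_v S(z_h)·v_h ) dx. -/
open Matrix MeasureTheory

/-- The block matrix `J = [[0, −Λᵀ],[Λ, 0]]` (for `m` even) or
`[[0, 0, −Λᵀ],[0, 0, 0],[Λ, 0, 0]]` with middle block of size 1 (for `m` odd),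
where the outer blocks have size `⌊m/2⌋`. -/
def Jmat (m : ℕ) (Λ : Matrix (Fin (m/2)) (Fin (m/2)) ℝ) : Matrix (Fin m) (Fin m) ℝ :=
  fun i j =>
    if h : (i : ℕ) < m/2 ∧ m - m/2 ≤ (j : ℕ) then
      -Λ ⟨(j : ℕ) - (m - m/2), by have := j.isLt; omega⟩ ⟨(i : ℕ), h.1⟩
    else if h' : m - m/2 ≤ (i : ℕ) ∧ (j : ℕ) < m/2 then
      Λ ⟨(i : ℕ) - (m - m/2), by have := i.isLt; omega⟩ ⟨(j : ℕ), h'.2⟩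
    else 0

/-- `D = diag(I_{⌊m/2⌋}, −I_{⌊m/2⌋})` for even `m`, `diag(I_{⌊m/2⌋}, 1, −I_{⌊m/2⌋})`
for odd `m`. -/
def Dmat (m : ℕ) : Matrix (Fin m) (Fin m) ℝ :=
  fun i j =>
    if i = j then (if (i : ℕ) < m/2 then 1 else if m - m/2 ≤ (i : ℕ) then -1 else 1)
    else 0

/-- The vector of the last `⌊m/2⌋` components of `w : ℝ^m`. -/
def lastHalf (m : ℕ) (w : Fin m → ℝ) : Fin (m/2) → ℝ :=
  fun i => w ⟨m - m/2 + (i : ℕ), by have := i.isLt; omega⟩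


lemma dotT {m : ℕ} (A : Matrix (Fin m) (Fin m) ℝ) (a b : Fin m → ℝ) :
    A.mulVec a ⬝ᵥ b = a ⬝ᵥ Aᵀ.mulVec b := by
  rw [dotProduct_comm, dotProduct_mulVec, ← Matrix.mulVec_transpose,
    dotProduct_comm]

lemma dot_anti {m : ℕ} {K : Matrix (Fin m) (Fin m) ℝ} (hK : Kᵀ = -K)
    (a b : Fin m → ℝ) : a ⬝ᵥ K.mulVec b = -(K.mulVec a ⬝ᵥ b) := by
  have h := dotT K a b
  rw [hK, Matrix.neg_mulVec, dotProduct_neg] at h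
  linarith

lemma dot_anti_self {m : ℕ} {K : Matrix (Fin m) (Fin m) ℝ} (hK : Kᵀ = -K)
    (a : Fin m → ℝ) : a ⬝ᵥ K.mulVec a = 0 := by
  have h := dot_anti hK a a
  rw [dotProduct_comm] at h
  have h2 : K.mulVec a ⬝ᵥ a = 0 := by linarith
  rw [dotProduct_comm]; exact h2



noncomputable def Pmat (m : ℕ) : Matrix (Fin m) (Fin m) ℝ :=
  Matrix.diagonal (fun i => if m - m/2 ≤ (i : ℕ) then (1:ℝ) else 0)

lemma Pmat_transpose (m : ℕ) : (Pmat m)ᵀ = Pmat m := Matrix.diagonal_transpose _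

lemma Dmat_eq (m : ℕ) : Dmat m = 1 - (2:ℝ) • Pmat m := by
  ext i j
  by_cases h : i = j
  · subst h
    simp [Dmat, Pmat, Matrix.one_apply, Matrix.diagonal]
    split_ifs <;> norm_num <;> omega
  · simp [Dmat, Pmat, Matrix.one_apply, Matrix.diagonal, h]

lemma JP_eq (m : ℕ) (Λ : Matrix (Fin (m/2)) (Fin (m/2)) ℝ) :
    (Jmat m Λ)ᵀ * Pmat m = Pmat m * Jmat m Λ - Jmat m Λ := by
  ext i j
  simp only [Pmat, Matrix.sub_apply, Matrix.mul_diagonal, Matrix.diagonal_mul,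
    Matrix.transpose_apply, Jmat]
  have h1 : m / 2 ≤ m - m/2 := by omega
  split_ifs <;> ring_nf <;> omega

lemma sum_lastHalf (m : ℕ) (f : Fin m → ℝ) :
    ∑ i : Fin m, (if m - m/2 ≤ (i:ℕ) then f i else 0)
      = ∑ i : Fin (m/2), f ⟨m - m/2 + (i:ℕ), by have := i.isLt; omega⟩ := by
  classical
  set s := m - m/2 with hs
  have hsm : s + m/2 = m := by omega
  let e : Fin (m/2) ↪ Fin m :=
    ⟨fun i => ⟨s + (i:ℕ), by have := i.isLt; omega⟩, by
      intro a b hab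
      have : s + (a:ℕ) = s + (b:ℕ) := congrArg Fin.val hab
      exact Fin.ext (by omega)⟩
  have h0 : ∀ x ∈ (Finset.univ : Finset (Fin m)), x ∉ Finset.univ.map e →
      (if s ≤ (x:ℕ) then f x else 0) = 0 := by
    intro x _ hx
    rw [if_neg]
    intro hsx
    apply hx
    rw [Finset.mem_map]
    refine ⟨⟨(x:ℕ) - s, by have := x.isLt; omega⟩, Finset.mem_univ _, ?_⟩
    exact Fin.ext (by show s + ((x:ℕ) - s) = (x:ℕ); omega)
  rw [← Finset.sum_subset (Finset.subset_univ (Finset.univ.map e)) h0, Finset.sum_map]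
  apply Finset.sum_congr rfl
  intro i _
  rw [if_pos (by show s ≤ s + (i:ℕ); omega)]
  rfl


lemma dot_Pmat (m : ℕ) (a b : Fin m → ℝ) :
    a ⬝ᵥ (Pmat m).mulVec b = lastHalf m a ⬝ᵥ lastHalf m b := by
  have h : ∀ i, (Pmat m).mulVec b i = if m - m/2 ≤ (i:ℕ) then b i else 0 := by
    intro i
    simp [Pmat, Matrix.mulVec_diagonal, ite_mul]
  rw [dotProduct]
  calc ∑ i, a i * (Pmat m).mulVec b i
      = ∑ i : Fin m, (if m - m/2 ≤ (i:ℕ) then a i * b i else 0) := by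
        apply Finset.sum_congr rfl; intro i _; rw [h i]; split_ifs <;> simp
    _ = _ := by rw [sum_lastHalf m (fun i => a i * b i)]; rfl

section KR
variable {m : ℕ} (Q P J K R M : Matrix (Fin m) (Fin m) ℝ)

lemma R_id (hQQ : Q * Qᵀ = 1) (hK : K = Qᵀ * J * Q) (hR : R = Qᵀ * P * Q)
    (hJP : Jᵀ * P = P * J - J) : Kᵀ * R = R * K - K := by
  have key : ∀ X : Matrix (Fin m) (Fin m) ℝ, Q * (Qᵀ * X) = X := by
    intro X; rw [← Matrix.mul_assoc, hQQ, Matrix.one_mul]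
  have hKT : Kᵀ = Qᵀ * Jᵀ * Q := by
    rw [hK, Matrix.transpose_mul, Matrix.transpose_mul, Matrix.transpose_transpose,
      Matrix.mul_assoc]
  rw [hKT, hR, hK]
  simp only [Matrix.mul_assoc]
  rw [key, key, ← Matrix.mul_assoc Jᵀ P Q, hJP]
  simp only [Matrix.sub_mul, Matrix.mul_sub, Matrix.mul_assoc]

lemma MR_zero (hMQ : ∀ (i j : Fin m), m - m/2 ≤ (j : ℕ) → (M * Qᵀ) i j = 0)
    (hR : R = Qᵀ * (Pmat m) * Q) : M * R = 0 := by
  have h1 : M * Qᵀ * Pmat m = 0 := by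
    ext i j
    rw [Pmat, Matrix.mul_diagonal]
    by_cases h : m - m/2 ≤ (j:ℕ)
    · rw [hMQ i j h]; simp
    · simp [h]
  rw [hR, ← Matrix.mul_assoc, ← Matrix.mul_assoc, h1, Matrix.zero_mul]

end KR

section Interface
variable {m : ℕ} {K R A B : Matrix (Fin m) (Fin m) ℝ}

lemma dotKR (hRT : Rᵀ = R) (hKR : Kᵀ * R = R * K - K) (a b : Fin m → ℝ) :
    K.mulVec a ⬝ᵥ R.mulVec b = K.mulVec b ⬝ᵥ R.mulVec a - a ⬝ᵥ K.mulVec b := by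
  rw [dotT K a (R.mulVec b), Matrix.mulVec_mulVec, hKR, Matrix.sub_mulVec,
    dotProduct_sub]
  congr 1
  rw [← Matrix.mulVec_mulVec]
  have h := dotT R a (K.mulVec b)
  rw [hRT] at h
  rw [← h, dotProduct_comm]

lemma dotBR (hBR : Bᵀ * R = 0) (c d : Fin m → ℝ) :
    B.mulVec c ⬝ᵥ R.mulVec d = 0 := by
  rw [dotT B c (R.mulVec d), Matrix.mulVec_mulVec, hBR]
  simp

lemma interface_id {At : Matrix (Fin m) (Fin m) ℝ}
    (hKT : Kᵀ = -K) (hRT : Rᵀ = R) (hKR : Kᵀ * R = R * K - K)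
    (hBR : Bᵀ * R = 0)
    (hAt : ∀ d : Fin m → ℝ,
      At.mulVec d ⬝ᵥ d = A.mulVec d ⬝ᵥ d - 2*(A.mulVec d ⬝ᵥ R.mulVec d))
    (a b c : Fin m → ℝ) :
    (K.mulVec ((1/2:ℝ)•(a+b)) + A.mulVec (a-b) + B.mulVec c) ⬝ᵥ R.mulVec (a-b)
      - (1/2)*(K.mulVec a ⬝ᵥ R.mulVec a - K.mulVec b ⬝ᵥ R.mulVec b)
    = (1/2)*((K.mulVec ((1/2:ℝ)•(a+b)) + A.mulVec (a-b)) ⬝ᵥ (a-b))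
      - (1/2)*(At.mulVec (a-b) ⬝ᵥ (a-b)) := by
  have hB0 := dotBR (B := B) (R := R) hBR c (a - b)
  have hKRab := dotKR hRT hKR a b
  have haa : K.mulVec a ⬝ᵥ a = 0 := by
    rw [dotProduct_comm]; exact dot_anti_self hKT a
  have hbb : K.mulVec b ⬝ᵥ b = 0 := by
    rw [dotProduct_comm]; exact dot_anti_self hKT b
  have hab : K.mulVec a ⬝ᵥ b = -(K.mulVec b ⬝ᵥ a) := by
    have h := dot_anti hKT b a
    rw [dotProduct_comm b (K.mulVec a)] at h
    exact h
  have hKab : a ⬝ᵥ K.mulVec b = K.mulVec b ⬝ᵥ a := dotProduct_comm _ _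
  rw [hAt (a - b)]
  simp only [add_dotProduct, Matrix.mulVec_smul, smul_dotProduct, smul_eq_mul,
    Matrix.mulVec_add, Matrix.mulVec_sub, sub_dotProduct, dotProduct_add,
    dotProduct_sub] at *
  linarith

end Interface


section Analytic
variable {m : ℕ}

lemma isPolyDegLE_mulVec {k : ℕ} (R : Matrix (Fin m) (Fin m) ℝ) {f : ℝ → Fin m → ℝ}
    (hf : ∀ i, IsPolyDegLE k (fun x => f x i)) (i : Fin m) :
    IsPolyDegLE k (fun x => R.mulVec (f x) i) := by
  choose p hdeg heval using hf
  refine ⟨∑ l, Polynomial.C (R i l) * p l, ?_, ?_⟩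
  · apply Polynomial.natDegree_sum_le_of_forall_le
    intro l _
    exact le_trans (Polynomial.natDegree_C_mul_le _ _) (hdeg l)
  · intro x
    simp only [Matrix.mulVec, dotProduct, Polynomial.eval_finset_sum,
      Polynomial.eval_mul, Polynomial.eval_C]
    exact Finset.sum_congr rfl fun l _ => by rw [show f x l = Polynomial.eval x (p l) from heval l x]

lemma hasDerivAt_mulVec (R : Matrix (Fin m) (Fin m) ℝ) {f : ℝ → Fin m → ℝ}
    {v : Fin m → ℝ} {x : ℝ} (hf : HasDerivAt f v x) :
    HasDerivAt (fun y => R.mulVec (f y)) (R.mulVec v) x := by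
  rw [hasDerivAt_pi] at hf ⊢
  intro i
  simp only [Matrix.mulVec, dotProduct]
  exact HasDerivAt.fun_sum (fun l _ => (hf l).const_mul (R i l))

lemma hasDerivAt_dot {f g : ℝ → Fin m → ℝ} {f' g' : Fin m → ℝ} {x : ℝ}
    (hf : HasDerivAt f f' x) (hg : HasDerivAt g g' x) :
    HasDerivAt (fun y => f y ⬝ᵥ g y) (f' ⬝ᵥ g x + f x ⬝ᵥ g') x := by
  rw [hasDerivAt_pi] at hf hg
  simp only [dotProduct]
  have h := HasDerivAt.fun_sum (fun i (_ : i ∈ (Finset.univ : Finset (Fin m))) =>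
    ((hf i).fun_mul (hg i)))
  rw [Finset.sum_add_distrib] at h
  exact h

lemma continuous_dotv {f g : ℝ → Fin m → ℝ}
    (hf : ∀ i, Continuous fun x => f x i) (hg : ∀ i, Continuous fun x => g x i) :
    Continuous fun x => f x ⬝ᵥ g x := by
  simp only [dotProduct]
  exact continuous_finset_sum _ fun i _ => (hf i).mul (hg i)

lemma continuous_mulVecv (R : Matrix (Fin m) (Fin m) ℝ) {f : ℝ → Fin m → ℝ}
    (hf : ∀ i, Continuous fun x => f x i) (i : Fin m) :
    Continuous fun x => R.mulVec (f x) i := by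
  simp only [Matrix.mulVec, dotProduct]
  exact continuous_finset_sum _ fun l _ => continuous_const.mul (hf l)

lemma cell_ibp {K R : Matrix (Fin m) (Fin m) ℝ} (hKT : Kᵀ = -K) (hRT : Rᵀ = R)
    (hKR : Kᵀ * R = R * K - K) {f f' : ℝ → Fin m → ℝ}
    (hder : ∀ x, HasDerivAt f (f' x) x)
    (hcf : ∀ i, Continuous fun x => f x i) (hcf' : ∀ i, Continuous fun x => f' x i)
    (a b : ℝ) :
    (∫ x in a..b, K.mulVec (f x) ⬝ᵥ R.mulVec (f' x))
    = (1/2)*((K.mulVec (f b) ⬝ᵥ R.mulVec (f b)) - (K.mulVec (f a) ⬝ᵥ R.mulVec (f a)))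
      - (1/2) * ∫ x in a..b, K.mulVec (f' x) ⬝ᵥ f x := by
  have c1 : Continuous fun x => K.mulVec (f x) ⬝ᵥ R.mulVec (f' x) :=
    continuous_dotv (continuous_mulVecv K hcf) (continuous_mulVecv R hcf')
  have c2 : Continuous fun x => K.mulVec (f' x) ⬝ᵥ f x :=
    continuous_dotv (continuous_mulVecv K hcf') hcf
  have key : (∫ x in a..b,
      (2*(K.mulVec (f x) ⬝ᵥ R.mulVec (f' x)) + K.mulVec (f' x) ⬝ᵥ f x))
      = (K.mulVec (f b) ⬝ᵥ R.mulVec (f b)) - (K.mulVec (f a) ⬝ᵥ R.mulVec (f a)) := by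
    apply intervalIntegral.integral_eq_sub_of_hasDerivAt
    · intro x _
      have h := hasDerivAt_dot (hasDerivAt_mulVec K (hder x)) (hasDerivAt_mulVec R (hder x))
      have e : K.mulVec (f' x) ⬝ᵥ R.mulVec (f x) + K.mulVec (f x) ⬝ᵥ R.mulVec (f' x)
          = 2*(K.mulVec (f x) ⬝ᵥ R.mulVec (f' x)) + K.mulVec (f' x) ⬝ᵥ f x := by
        have h1 := dotKR hRT hKR (f' x) (f x)
        have h2 := dot_anti hKT (f' x) (f x)
        linarith
      rw [← e]
      exact h
    · exact ((continuous_const.mul c1).add c2).intervalIntegrable a b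
  rw [intervalIntegral.integral_add ((continuous_const.fun_mul c1).intervalIntegrable a b)
    (c2.intervalIntegrable a b), intervalIntegral.integral_const_mul] at key
  linarith

end Analytic


lemma sum_lidx {N : ℕ} (hN : 0 < N) (g : ℕ → ℝ) :
    ∑ j ∈ Finset.range N, g (lidx N j) = ∑ j ∈ Finset.range N, g j := by
  refine Finset.sum_nbij' (fun j => lidx N j) (fun j => (j+1) % N) ?_ ?_ ?_ ?_ ?_
  · intro a _; exact Finset.mem_range.mpr (Nat.mod_lt _ hN)
  · intro a _; exact Finset.mem_range.mpr (Nat.mod_lt _ hN)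
  · intro a ha
    have haN := Finset.mem_range.mp ha
    show (lidx N a + 1) % N = a
    rw [lidx, Nat.mod_add_mod]
    have : a + N - 1 + 1 = a + N := by omega
    rw [this, Nat.add_mod_right]
    exact Nat.mod_eq_of_lt haN
  · intro a ha
    have haN := Finset.mem_range.mp ha
    show lidx N ((a+1) % N) = a
    rw [lidx]
    have h1 : (a+1) % N + N - 1 = (a+1) % N + (N - 1) := by omega
    rw [h1, Nat.mod_add_mod]
    have : a + 1 + (N - 1) = a + N := by omega
    rw [this, Nat.add_mod_right]
    exact Nat.mod_eq_of_lt haN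
  · intro a _; rfl

lemma dotR_lastHalf {m : ℕ} {Q R : Matrix (Fin m) (Fin m) ℝ}
    (hR : R = Qᵀ * Pmat m * Q) (g v : Fin m → ℝ) :
    g ⬝ᵥ R.mulVec v = lastHalf m (Q.mulVec g) ⬝ᵥ lastHalf m (Q.mulVec v) := by
  rw [hR, ← Matrix.mulVec_mulVec, ← Matrix.mulVec_mulVec, ← dotT Q g _, dot_Pmat]

/-- Corollary 3.1 of the paper: under the structural assumptions `K = Qᵀ J Q`,
`B = β M`, and vanishing of the last `⌊m/2⌋` columns of `M Qᵀ`, the conserved energy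
simplifies to `Σ_j ∫ (S(z_h) − ∇_v S(z_h)·v_h) dx + (1/2) Σ_j (Ã[z_h])·[z_h]`;
moreover if `Ã` is antisymmetric the interface sum vanishes. -/
theorem stmt9 {m N k : ℕ} (hm : 0 < m) (hN : 0 < N)
    (xs : ℕ → ℝ) (hxs : ∀ i < N, xs i < xs (i+1))
    (M K A B : Matrix (Fin m) (Fin m) ℝ)
    (hM : Mᵀ = -M) (hK : Kᵀ = -K) (hB : Bᵀ = -B) (hA : Aᵀ = A)
    (S : (Fin m → ℝ) → ℝ) (hS : ContDiff ℝ 1 S)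
    (z : ℕ → ℝ → ℝ → Fin m → ℝ) (hz : IsMeshFun N k z)
    (hscheme : SatisfiesDG N k xs M K A B (gradS S) z)
    (Q : Matrix (Fin m) (Fin m) ℝ) (Λ : Matrix (Fin (m/2)) (Fin (m/2)) ℝ)
    (hQ : Qᵀ * Q = 1) (hKQ : K = Qᵀ * Jmat m Λ * Q)
    (β : ℝ) (hBM : B = β • M)
    (hMQ : ∀ (i j : Fin m), m - m/2 ≤ (j : ℕ) → (M * Qᵀ) i j = 0) :
    (∀ t : ℝ,
      (∑ j ∈ Finset.range N, ∫ x in (xs j)..(xs (j+1)),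
          (S (z j t x) - (1/2) * (K.mulVec (deriv (fun y => z j t y) x) ⬝ᵥ z j t x)))
        + (1/2) * ∑ j ∈ Finset.range N,
            ((K.mulVec (avgv N xs z j t) + A.mulVec (jmpv N xs z j t)) ⬝ᵥ jmpv N xs z j t)
      = (∑ j ∈ Finset.range N, ∫ x in (xs j)..(xs (j+1)),
          (S (z j t x)
            - lastHalf m (Q.mulVec (gradS S (z j t x))) ⬝ᵥ lastHalf m (Q.mulVec (z j t x))))
        + (1/2) * ∑ j ∈ Finset.range N,
            ((Qᵀ * Dmat m * Q * A).mulVec (jmpv N xs z j t) ⬝ᵥ jmpv N xs z j t))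
    ∧
    ((Qᵀ * Dmat m * Q * A)ᵀ = -(Qᵀ * Dmat m * Q * A) →
      ∀ t : ℝ,
        (∑ j ∈ Finset.range N, ∫ x in (xs j)..(xs (j+1)),
            (S (z j t x) - (1/2) * (K.mulVec (deriv (fun y => z j t y) x) ⬝ᵥ z j t x)))
          + (1/2) * ∑ j ∈ Finset.range N,
              ((K.mulVec (avgv N xs z j t) + A.mulVec (jmpv N xs z j t)) ⬝ᵥ jmpv N xs z j t)
        = ∑ j ∈ Finset.range N, ∫ x in (xs j)..(xs (j+1)),
            (S (z j t x)
              - lastHalf m (Q.mulVec (gradS S (z j t x)))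
                  ⬝ᵥ lastHalf m (Q.mulVec (z j t x)))) := by
  classical
  have hQQ : Q * Qᵀ = 1 := mul_eq_one_comm.mp hQ
  set R : Matrix (Fin m) (Fin m) ℝ := Qᵀ * Pmat m * Q with hRdef
  have hRT : Rᵀ = R := by
    rw [hRdef, Matrix.transpose_mul, Matrix.transpose_mul, Matrix.transpose_transpose,
      Pmat_transpose, Matrix.mul_assoc]
  have hKRm : Kᵀ * R = R * K - K :=
    R_id Q (Pmat m) (Jmat m Λ) K R hQQ hKQ hRdef (JP_eq m Λ)
  have hMR : M * R = 0 := MR_zero Q R M hMQ hRdef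
  have hMTR : Mᵀ * R = 0 := by rw [hM, Matrix.neg_mul, hMR, neg_zero]
  have hBTR : Bᵀ * R = 0 := by
    rw [hB, hBM, Matrix.neg_mul, Matrix.smul_mul, hMR, smul_zero, neg_zero]
  have hQDQ : Qᵀ * Dmat m * Q = 1 - (2:ℝ) • R := by
    rw [Dmat_eq, Matrix.mul_sub, Matrix.mul_one, Matrix.mul_smul, Matrix.sub_mul,
      Matrix.smul_mul, hQ, hRdef]
  have hAt : ∀ d : Fin m → ℝ, (Qᵀ * Dmat m * Q * A).mulVec d ⬝ᵥ d
      = A.mulVec d ⬝ᵥ d - 2*(A.mulVec d ⬝ᵥ R.mulVec d) := by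
    intro d
    have h1 : Qᵀ * Dmat m * Q * A = A - (2:ℝ) • (R * A) := by
      rw [hQDQ, Matrix.sub_mul, Matrix.one_mul, Matrix.smul_mul]
    rw [h1, Matrix.sub_mulVec, sub_dotProduct, Matrix.smul_mulVec, smul_dotProduct,
      smul_eq_mul, ← Matrix.mulVec_mulVec, dotT R (A.mulVec d) d, hRT,
      dotProduct_comm (A.mulVec d) (R.mulVec d)]
  have lidx_succ : ∀ j < N, (lidx N j + 1) % N = j := by
    intro j hj
    rw [lidx, Nat.mod_add_mod]
    have h2 : j + N - 1 + 1 = j + N := by omega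
    rw [h2, Nat.add_mod_right]
    exact Nat.mod_eq_of_lt hj
  have hfderivS : Continuous (fderiv ℝ S) := hS.continuous_fderiv one_ne_zero
  have main : ∀ t : ℝ,
      (∑ j ∈ Finset.range N, ∫ x in (xs j)..(xs (j+1)),
          (S (z j t x) - (1/2) * (K.mulVec (deriv (fun y => z j t y) x) ⬝ᵥ z j t x)))
        + (1/2) * ∑ j ∈ Finset.range N,
            ((K.mulVec (avgv N xs z j t) + A.mulVec (jmpv N xs z j t)) ⬝ᵥ jmpv N xs z j t)
      = (∑ j ∈ Finset.range N, ∫ x in (xs j)..(xs (j+1)),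
          (S (z j t x)
            - lastHalf m (Q.mulVec (gradS S (z j t x))) ⬝ᵥ lastHalf m (Q.mulVec (z j t x))))
        + (1/2) * ∑ j ∈ Finset.range N,
            ((Qᵀ * Dmat m * Q * A).mulVec (jmpv N xs z j t) ⬝ᵥ jmpv N xs z j t) := by
    intro t
    have cell : ∀ j ∈ Finset.range N,
        (∫ x in (xs j)..(xs (j+1)),
          (S (z j t x) - (1/2) * (K.mulVec (deriv (fun y => z j t y) x) ⬝ᵥ z j t x)))
        = (∫ x in (xs j)..(xs (j+1)),
            (S (z j t x)
              - lastHalf m (Q.mulVec (gradS S (z j t x))) ⬝ᵥ lastHalf m (Q.mulVec (z j t x))))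
          + (((1/2)*(K.mulVec (trRv N xs z (lidx N j) t) ⬝ᵥ R.mulVec (trRv N xs z (lidx N j) t))
                - numFluxv N xs K A B z (lidx N j) t ⬝ᵥ R.mulVec (trRv N xs z (lidx N j) t))
            - ((1/2)*(K.mulVec (trLv xs z j t) ⬝ᵥ R.mulVec (trLv xs z j t))
                - numFluxv N xs K A B z j t ⬝ᵥ R.mulVec (trLv xs z j t))) := by
      intro j hj
      have hjN := Finset.mem_range.mp hj
      choose p hdeg hev using hz.1 j hjN t
      set f' : ℝ → Fin m → ℝ := fun x i => Polynomial.eval x (Polynomial.derivative (p i))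
        with hf'def
      have hfeq : (fun y => z j t y) = fun y i => Polynomial.eval y (p i) :=
        funext fun y => funext fun i => hev i y
      have hder : ∀ x : ℝ, HasDerivAt (fun y => z j t y) (f' x) x := by
        intro x
        rw [hfeq]
        exact hasDerivAt_pi.mpr fun i => Polynomial.hasDerivAt (p i) x
      have hderiv_eq : ∀ x : ℝ, deriv (fun y => z j t y) x = f' x := fun x => (hder x).deriv
      have hcf : ∀ i, Continuous fun x => z j t x i := by
        intro i
        have e : (fun x => z j t x i) = fun x => Polynomial.eval x (p i) :=
          funext fun x => hev i x
        rw [e]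
        exact (p i).continuous
      have hcf' : ∀ i, Continuous fun x => f' x i := fun i => Polynomial.continuous _
      have hgradc : ∀ i, Continuous fun x => gradS S (z j t x) i := by
        intro i
        have h1 : Continuous fun x : ℝ => fderiv ℝ S (z j t x) :=
          hfderivS.comp (continuous_pi hcf)
        exact h1.clm_apply continuous_const
      have hSc : Continuous fun x => S (z j t x) := hS.continuous.comp (continuous_pi hcf)
      have hLHc : Continuous fun x =>
          lastHalf m (Q.mulVec (gradS S (z j t x))) ⬝ᵥ lastHalf m (Q.mulVec (z j t x)) := by
        have e : (fun x => lastHalf m (Q.mulVec (gradS S (z j t x)))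
              ⬝ᵥ lastHalf m (Q.mulVec (z j t x)))
            = fun x => gradS S (z j t x) ⬝ᵥ R.mulVec (z j t x) :=
          funext fun x => (dotR_lastHalf hRdef _ _).symm
        rw [e]
        exact continuous_dotv hgradc (continuous_mulVecv R hcf)
      have hXc : Continuous fun x => K.mulVec (f' x) ⬝ᵥ z j t x :=
        continuous_dotv (continuous_mulVecv K hcf') hcf
      have hφpoly : ∀ i, IsPolyDegLE k fun x => R.mulVec (z j t x) i :=
        isPolyDegLE_mulVec R (hz.1 j hjN t)
      have hdφ : ∀ x : ℝ, deriv (fun x' => R.mulVec (z j t x')) x = R.mulVec (f' x) :=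
        fun x => (hasDerivAt_mulVec R (hder x)).deriv
      have hEq : (∫ x in (xs j)..(xs (j+1)),
            M.mulVec (deriv (fun s => z j s x) t) ⬝ᵥ R.mulVec (z j t x))
          - (∫ x in (xs j)..(xs (j+1)),
              K.mulVec (z j t x) ⬝ᵥ deriv (fun x' => R.mulVec (z j t x')) x)
          + numFluxv N xs K A B z j t ⬝ᵥ R.mulVec (z j t (xs (j+1)))
          - numFluxv N xs K A B z (lidx N j) t ⬝ᵥ R.mulVec (z j t (xs j))
          = ∫ x in (xs j)..(xs (j+1)), gradS S (z j t x) ⬝ᵥ R.mulVec (z j t x) :=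
        hscheme j hjN t (fun x => R.mulVec (z j t x)) hφpoly
      simp only [hdφ] at hEq
      have hT1 : (∫ x in (xs j)..(xs (j+1)),
          M.mulVec (deriv (fun s => z j s x) t) ⬝ᵥ R.mulVec (z j t x)) = 0 := by
        have e : ∀ x : ℝ,
            M.mulVec (deriv (fun s => z j s x) t) ⬝ᵥ R.mulVec (z j t x) = 0 :=
          fun x => dotBR hMTR _ _
        simp only [e, intervalIntegral.integral_zero]
      have hibp : (∫ x in (xs j)..(xs (j+1)), K.mulVec (z j t x) ⬝ᵥ R.mulVec (f' x))
          = (1/2)*((K.mulVec (z j t (xs (j+1))) ⬝ᵥ R.mulVec (z j t (xs (j+1))))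
              - (K.mulVec (z j t (xs j)) ⬝ᵥ R.mulVec (z j t (xs j))))
            - (1/2) * ∫ x in (xs j)..(xs (j+1)), K.mulVec (f' x) ⬝ᵥ z j t x :=
        cell_ibp hK hRT hKRm hder hcf hcf' (xs j) (xs (j+1))
      have hT5 : (∫ x in (xs j)..(xs (j+1)), gradS S (z j t x) ⬝ᵥ R.mulVec (z j t x))
          = ∫ x in (xs j)..(xs (j+1)),
              lastHalf m (Q.mulVec (gradS S (z j t x))) ⬝ᵥ lastHalf m (Q.mulVec (z j t x)) := by
        apply intervalIntegral.integral_congr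
        intro x _
        exact dotR_lastHalf hRdef _ _
      have hbdry : z j t (xs j) = trRv N xs z (lidx N j) t := by
        rw [trRv, lidx_succ j hjN]
      have htrL : trLv xs z j t = z j t (xs (j+1)) := rfl
      have split1 : (∫ x in (xs j)..(xs (j+1)),
            (S (z j t x) - (1/2) * (K.mulVec (deriv (fun y => z j t y) x) ⬝ᵥ z j t x)))
          = (∫ x in (xs j)..(xs (j+1)), S (z j t x))
            - (1/2) * ∫ x in (xs j)..(xs (j+1)), K.mulVec (f' x) ⬝ᵥ z j t x := by
        simp only [hderiv_eq]
        rw [intervalIntegral.integral_sub (hSc.intervalIntegrable _ _)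
          ((continuous_const.fun_mul hXc).intervalIntegrable _ _),
          intervalIntegral.integral_const_mul]
      have split2 : (∫ x in (xs j)..(xs (j+1)),
            (S (z j t x)
              - lastHalf m (Q.mulVec (gradS S (z j t x))) ⬝ᵥ lastHalf m (Q.mulVec (z j t x))))
          = (∫ x in (xs j)..(xs (j+1)), S (z j t x))
            - ∫ x in (xs j)..(xs (j+1)),
                lastHalf m (Q.mulVec (gradS S (z j t x))) ⬝ᵥ lastHalf m (Q.mulVec (z j t x)) := by
        rw [intervalIntegral.integral_sub (hSc.intervalIntegrable _ _)
          (hLHc.intervalIntegrable _ _)]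
      rw [split1, split2, htrL, ← hbdry]
      linarith [hEq, hT1, hibp, hT5]
    rw [Finset.sum_congr rfl cell, Finset.sum_add_distrib, Finset.sum_sub_distrib]
    rw [sum_lidx hN (fun i =>
      (1/2)*(K.mulVec (trRv N xs z i t) ⬝ᵥ R.mulVec (trRv N xs z i t))
        - numFluxv N xs K A B z i t ⬝ᵥ R.mulVec (trRv N xs z i t))]
    have hkey : ∀ j ∈ Finset.range N,
        ((1/2)*(K.mulVec (trRv N xs z j t) ⬝ᵥ R.mulVec (trRv N xs z j t))
            - numFluxv N xs K A B z j t ⬝ᵥ R.mulVec (trRv N xs z j t))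
          - ((1/2)*(K.mulVec (trLv xs z j t) ⬝ᵥ R.mulVec (trLv xs z j t))
            - numFluxv N xs K A B z j t ⬝ᵥ R.mulVec (trLv xs z j t))
        = (1/2)*((Qᵀ * Dmat m * Q * A).mulVec (jmpv N xs z j t) ⬝ᵥ jmpv N xs z j t)
          - (1/2)*((K.mulVec (avgv N xs z j t) + A.mulVec (jmpv N xs z j t))
              ⬝ᵥ jmpv N xs z j t) := by
      intro j _
      have hint := interface_id (K := K) (R := R) (A := A) (B := B)
        (At := Qᵀ * Dmat m * Q * A) hK hRT hKRm hBTR hAt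
        (trRv N xs z j t) (trLv xs z j t) (deriv (fun s => jmpv N xs z j s) t)
      simp only [numFluxv, avgv, jmpv] at hint ⊢
      simp only [Matrix.mulVec_sub, Matrix.mulVec_add, add_dotProduct, sub_dotProduct,
        dotProduct_sub, dotProduct_add] at hint ⊢
      linarith [hint]
    have e2 : (∑ j ∈ Finset.range N,
          ((1/2)*(K.mulVec (trRv N xs z j t) ⬝ᵥ R.mulVec (trRv N xs z j t))
            - numFluxv N xs K A B z j t ⬝ᵥ R.mulVec (trRv N xs z j t)))
        - (∑ j ∈ Finset.range N,
          ((1/2)*(K.mulVec (trLv xs z j t) ⬝ᵥ R.mulVec (trLv xs z j t))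
            - numFluxv N xs K A B z j t ⬝ᵥ R.mulVec (trLv xs z j t)))
        = (1/2) * (∑ j ∈ Finset.range N,
              ((Qᵀ * Dmat m * Q * A).mulVec (jmpv N xs z j t) ⬝ᵥ jmpv N xs z j t))
          - (1/2) * (∑ j ∈ Finset.range N,
              ((K.mulVec (avgv N xs z j t) + A.mulVec (jmpv N xs z j t))
                ⬝ᵥ jmpv N xs z j t)) := by
      rw [← Finset.sum_sub_distrib, Finset.mul_sum, Finset.mul_sum, ← Finset.sum_sub_distrib]
      exact Finset.sum_congr rfl hkey
    linarith [e2]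
  refine ⟨main, fun hanti t => ?_⟩
  rw [main t]
  have hzero : (∑ j ∈ Finset.range N,
      ((Qᵀ * Dmat m * Q * A).mulVec (jmpv N xs z j t) ⬝ᵥ jmpv N xs z j t)) = 0 := by
    apply Finset.sum_eq_zero
    intro j _
    have h := dot_anti_self hanti (jmpv N xs z j t)
    rw [dotProduct_comm] at h
    exact h
  rw [hzero]
  ring
end
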